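/- arXiv:1609.01000 — 5 statements merged into one kernel-verified Lean document; each statement's English description precedes it below -/
import Mathlib

section
/- Let d ≥ 1 and let T = ⋃_{j≥0} [d]^j be the countable set of all finite tuples of indices from {1,…,d} (including the empty tuple). For z ∈ ℝ^d with ‖z‖₂ ≤ 1, define φ(z) ∈ ℝ^T by φ(z)_{(k_1,…,k_j)} = 2^{−(j+1)/2} z_{k_1} ⋯ z_{k_j}. Then for all z, z' in the closed unit ball of ℝ^d: (i) φ(z) is square-summable, i.e. φ(z) ∈ ℓ²(T), with ∑_{τ∈T} φ(z)_τ² = 1/(2 − ‖z‖₂²); (ii) the family (φ(z)_τ φ(z')_τ)_{τ∈T} is absolutely summable and ∑_{τ∈T} φ(z)_τ φ(z')_τ = ∑_{j=0}^∞ 2^{−(j+1)} ⟨z, z'⟩^j = 1/(2 − ⟨z, z'⟩). -/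
open scoped RealInnerProductSpace

/-! The terms of `φ(z)_τ φ(z')_τ` with `τ ∈ [d]^j` sum, by expanding `(∑ₘ z_m z'_m)^j`, to
`2^{-(j+1)} ⟨z, z'⟩^j`, so the kernel is the geometric series `∑_j 2^{-(j+1)} ⟨z, z'⟩^j`.
Absolute summability follows in the same way from Cauchy–Schwarz, `∑ₘ |z_m| |z'_m| ≤ 1`,
which bounds the `j`-th level of `|φ(z)_τ φ(z')_τ|` by `2^{-(j+1)}`. -/

abbrev Tup (d : ℕ) : Type := Σ j : ℕ, Fin j → Fin d

noncomputable def phi (d : ℕ) (z : EuclideanSpace ℝ (Fin d)) (τ : Tup d) : ℝ :=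
  (Real.sqrt 2)⁻¹ ^ (τ.1 + 1) * ∏ i : Fin τ.1, z (τ.2 i)

lemma EuclideanSpace.sum_abs_mul_abs_le_norm_mul_norm {ι : Type*} [Fintype ι]
    (x y : EuclideanSpace ℝ ι) : ∑ m, |x m| * |y m| ≤ ‖x‖ * ‖y‖ := by
  simpa [EuclideanSpace.norm_eq] using Real.sum_mul_le_sqrt_mul_sqrt Finset.univ (|x ·|) (|y ·|)

lemma hasSum_inv_two_pow_succ_mul_pow {s : ℝ} (hs : |s| < 2) :
    HasSum (fun j : ℕ => (2 : ℝ)⁻¹ ^ (j + 1) * s ^ j) (1 / (2 - s)) := by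
  have hs' : |s / 2| < 1 := by rw [abs_div, abs_two]; linarith
  have hs2 : 2 - s ≠ 0 := by linarith [le_abs_self s]
  have h_terms : ∀ j : ℕ, (2 : ℝ)⁻¹ ^ (j + 1) * s ^ j = 2⁻¹ * (s / 2) ^ j := fun j => by
    rw [div_eq_mul_inv, mul_pow, pow_succ]; ring
  have h_sum : 1 / (2 - s) = 2⁻¹ * (1 - s / 2)⁻¹ := by field_simp
  simpa only [h_terms, h_sum] using (hasSum_geometric_of_abs_lt_one hs').mul_left 2⁻¹

section FeatureMap

variable {d : ℕ} (z z' : EuclideanSpace ℝ (Fin d))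

lemma phi_mul_phi (τ : Tup d) :
    phi d z τ * phi d z' τ = (2 : ℝ)⁻¹ ^ (τ.1 + 1) * ∏ i, z (τ.2 i) * z' (τ.2 i) := by
  have h2 : (Real.sqrt 2)⁻¹ * (Real.sqrt 2)⁻¹ = (2 : ℝ)⁻¹ := by
    rw [← mul_inv, Real.mul_self_sqrt zero_le_two]
  rw [phi, phi, mul_mul_mul_comm, ← mul_pow, h2, ← Finset.prod_mul_distrib]

lemma sum_phi_mul_phi_sigma (j : ℕ) :
    ∑ k : Fin j → Fin d, phi d z ⟨j, k⟩ * phi d z' ⟨j, k⟩ = (2 : ℝ)⁻¹ ^ (j + 1) * ⟪z, z'⟫ ^ j := by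
  have h_inner : ⟪z, z'⟫ = ∑ m, z m * z' m := by
    simp only [PiLp.inner_apply, RCLike.inner_apply, conj_trivial, mul_comm]
  simp only [phi_mul_phi, ← Finset.mul_sum, h_inner, Fintype.sum_pow]

lemma sum_abs_phi_mul_phi_sigma (j : ℕ) :
    ∑ k : Fin j → Fin d, |phi d z ⟨j, k⟩ * phi d z' ⟨j, k⟩|
      = (2 : ℝ)⁻¹ ^ (j + 1) * (∑ m, |z m| * |z' m|) ^ j := by
  simp only [phi_mul_phi, abs_mul, abs_pow, Finset.abs_prod, abs_inv, abs_two, ← Finset.mul_sum,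
    Fintype.sum_pow]

variable {z z'}

lemma summable_abs_phi_mul_phi (hz : ‖z‖ ≤ 1) (hz' : ‖z'‖ ≤ 1) :
    Summable fun τ : Tup d => |phi d z τ * phi d z' τ| := by
  have h_cs : ∑ m, |z m| * |z' m| ≤ 1 :=
    (EuclideanSpace.sum_abs_mul_abs_le_norm_mul_norm z z').trans
      (mul_le_one₀ hz (norm_nonneg _) hz')
  refine (summable_sigma_of_nonneg fun _ => abs_nonneg _).mpr
    ⟨fun _ => Summable.of_finite, ?_⟩
  refine (hasSum_inv_two_pow_succ_mul_pow (s := 1) (by norm_num)).summable.of_nonneg_of_le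
    (fun _ => tsum_nonneg fun _ => abs_nonneg _) fun j => ?_
  rw [tsum_fintype, sum_abs_phi_mul_phi_sigma, one_pow]
  gcongr
  exact pow_le_one₀ (by positivity) h_cs

lemma tsum_phi_mul_phi (hz : ‖z‖ ≤ 1) (hz' : ‖z'‖ ≤ 1) :
    ∑' τ : Tup d, phi d z τ * phi d z' τ = ∑' j : ℕ, (2 : ℝ)⁻¹ ^ (j + 1) * ⟪z, z'⟫ ^ j := by
  rw [(summable_abs_phi_mul_phi hz hz').of_abs.tsum_sigma]
  simp only [tsum_fintype, sum_phi_mul_phi_sigma]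

end FeatureMap

theorem inverse_polynomial_kernel_feature_map_general
    (d : ℕ)
    (z z' : EuclideanSpace ℝ (Fin d)) (hz : ‖z‖ ≤ 1) (hz' : ‖z'‖ ≤ 1) :
    (Summable fun τ : Tup d => (phi d z τ) ^ 2) ∧
    (∑' τ : Tup d, (phi d z τ) ^ 2) = 1 / (2 - ‖z‖ ^ 2) ∧
    (Summable fun τ : Tup d => |phi d z τ * phi d z' τ|) ∧
    (∑' τ : Tup d, phi d z τ * phi d z' τ)
      = (∑' j : ℕ, ((2 : ℝ))⁻¹ ^ (j + 1) * ⟪z, z'⟫ ^ j) ∧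
    (∑' j : ℕ, ((2 : ℝ))⁻¹ ^ (j + 1) * ⟪z, z'⟫ ^ j) = 1 / (2 - ⟪z, z'⟫) := by
  have h_inner_lt : ∀ {x y : EuclideanSpace ℝ (Fin d)}, ‖x‖ ≤ 1 → ‖y‖ ≤ 1 → |⟪x, y⟫| < 2 :=
    fun hx hy => (abs_real_inner_le_norm _ _).trans_lt <| by
      nlinarith [mul_le_one₀ hx (norm_nonneg _) hy]
  refine ⟨?_, ?_, summable_abs_phi_mul_phi hz hz', tsum_phi_mul_phi hz hz',
    (hasSum_inv_two_pow_succ_mul_pow (h_inner_lt hz hz')).tsum_eq⟩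
  · simpa only [abs_mul_self, sq] using summable_abs_phi_mul_phi hz hz
  · rw [← real_inner_self_eq_norm_sq, ← (hasSum_inv_two_pow_succ_mul_pow (h_inner_lt hz hz)).tsum_eq,
      ← tsum_phi_mul_phi hz hz]
    simp only [sq]

/-- for `z, z'` in the closed unit ball of `ℝ^d`:
(i) `φ(z)` is square-summable with `∑_τ φ(z)_τ² = 1/(2 - ‖z‖²)`;
(ii) the family `(φ(z)_τ φ(z')_τ)_τ` is absolutely summable and
`∑_τ φ(z)_τ φ(z')_τ = ∑_{j=0}^∞ 2^{-(j+1)} ⟪z,z'⟫^j = 1/(2 - ⟪z,z'⟫)`. -/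
theorem inverse_polynomial_kernel_feature_map
    (d : ℕ) (hd : 1 ≤ d)
    (z z' : EuclideanSpace ℝ (Fin d)) (hz : ‖z‖ ≤ 1) (hz' : ‖z'‖ ≤ 1) :
    (Summable fun τ : Tup d => (phi d z τ) ^ 2) ∧
    (∑' τ : Tup d, (phi d z τ) ^ 2) = 1 / (2 - ‖z‖ ^ 2) ∧
    (Summable fun τ : Tup d => |phi d z τ * phi d z' τ|) ∧
    (∑' τ : Tup d, phi d z τ * phi d z' τ)
      = (∑' j : ℕ, ((2 : ℝ))⁻¹ ^ (j + 1) * ⟪z, z'⟫ ^ j) ∧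
    (∑' j : ℕ, ((2 : ℝ))⁻¹ ^ (j + 1) * ⟪z, z'⟫ ^ j) = 1 / (2 - ⟪z, z'⟫) :=
  inverse_polynomial_kernel_feature_map_general d z z' hz hz'
end

section
/- (Filters lie in the RKHS of the inverse polynomial kernel.) Let σ: ℝ → ℝ be given by a power series σ(t) = ∑_{j=0}^∞ a_j t^j, and define C_σ(λ) = √(∑_{j=0}^∞ 2^{j+1} a_j² λ^{2j}). Let w ∈ ℝ^{d} satisfy C_σ(‖w‖₂) < ∞ (which in particular implies the power series for σ converges absolutely on [−‖w‖₂, ‖w‖₂]). Then there exists a square-summable family w◇ ∈ ℓ²(T), indexed by the set T of finite tuples from {1,…,d}, such that ‖w◇‖_{ℓ²} = C_σ(‖w‖₂) and, for every z ∈ ℝ^d with ‖z‖₂ ≤ 1, the family (w◇_τ φ(z)_τ)_{τ∈T} is absolutely summable with ∑_{τ∈T} w◇_τ φ(z)_τ = σ(⟨w, z⟩). -/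
/-!
Write `w◇_{(k₁,…,k_j)} = a_j 2^{(j+1)/2} w_{k₁} ⋯ w_{k_j}`. The powers of `√2` cancel against
those in `φ(z)`, so `w◇_τ φ(z)_τ = a_j ∏ᵢ w_{kᵢ} z_{kᵢ}`; summing over the `d^j` tuples of length
`j` gives `a_j ⟪w, z⟫^j` by the multinomial expansion, and the same computation with squares gives
`2^{j+1} a_j² ‖w‖^{2j}`. Absolute convergence comes from `|a_j| ‖w‖^j ≤ 2^{j+1} a_j² ‖w‖^{2j} + 2^{-(j+1)}`
and `∑ₖ |w_k z_k| ≤ ‖w‖ ‖z‖`.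
-/

open scoped RealInnerProductSpace

/-- `C_σ(λ) = √(∑_{j=0}^∞ 2^{j+1} a_j² λ^{2j})`, the quantity associated to the
inverse polynomial kernel for an activation with power-series coefficients `a`. -/
noncomputable def Csigma (a : ℕ → ℝ) (lam : ℝ) : ℝ :=
  Real.sqrt (∑' j : ℕ, (2 : ℝ) ^ (j + 1) * (a j) ^ 2 * lam ^ (2 * j))

lemma sum_prod_apply_eq_sum_pow {ι R : Type*} [Fintype ι] [CommSemiring R] (j : ℕ)
    (g : ι → R) : ∑ k : Fin j → ι, ∏ i, g (k i) = (∑ x, g x) ^ j := by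
  rw [Finset.sum_pow', Fintype.piFinset_univ]

lemma hasSum_sigma_of_summable_abs_fiber {α : Type*} {β : α → Type*} [∀ j, Fintype (β j)]
    {f : (Σ j, β j) → ℝ} {s : ℝ} (habs : Summable fun j => ∑ k, |f ⟨j, k⟩|)
    (hs : HasSum (fun j => ∑ k, f ⟨j, k⟩) s) :
    Summable (fun τ => |f τ|) ∧ HasSum f s := by
  have hfin : ∀ j, Summable fun k : β j => f ⟨j, k⟩ := fun j => (hasSum_fintype _).summable
  have hsummAbs : Summable fun τ => |f τ| :=
    (summable_sigma_of_nonneg fun τ => abs_nonneg _).mpr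
      ⟨fun j => (hasSum_fintype _).summable, by simpa only [tsum_fintype] using habs⟩
  have hsumm : Summable f := summable_abs_iff.mp hsummAbs
  refine ⟨hsummAbs, ?_⟩
  convert hsumm.hasSum
  rw [hsumm.tsum_sigma' hfin, ← hs.tsum_eq]
  simp only [tsum_fintype]

lemma summable_of_summable_two_pow_mul_sq {b : ℕ → ℝ}
    (h : Summable fun j => (2 : ℝ) ^ (j + 1) * b j ^ 2) : Summable b := by
  refine Summable.of_norm_bounded (h.add (summable_geometric_two.mul_left (1 / 2))) fun j => ?_
  have hinv : (2 : ℝ) ^ (j + 1) * ((1 / 2) * (1 / 2) ^ j) = 1 := by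
    rw [← pow_succ', ← mul_pow]; norm_num
  -- AM-GM: `2 |b| ≤ 2^{j+1} b² + 2^{-(j+1)}`
  have hamgm : (2 : ℝ) ^ (j + 1) * b j ^ 2 + (1 / 2) * (1 / 2) ^ j - 2 * |b j|
      = (1 / 2) * (1 / 2) ^ j * ((2 : ℝ) ^ (j + 1) * |b j| - 1) ^ 2 := by
    rw [← sq_abs (b j)]
    linear_combination (2 * |b j| - (2 : ℝ) ^ (j + 1) * |b j| ^ 2) * hinv
  have hsq_nonneg : 0 ≤ (1 / 2) * (1 / 2) ^ j * ((2 : ℝ) ^ (j + 1) * |b j| - 1) ^ 2 := by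
    positivity
  rw [Real.norm_eq_abs]
  linarith [abs_nonneg (b j)]

lemma sum_abs_mul_le_norm_mul_norm {ι : Type*} [Fintype ι] (x y : EuclideanSpace ℝ ι) :
    ∑ i, |x i * y i| ≤ ‖x‖ * ‖y‖ := by
  simpa only [abs_mul, sq_abs, EuclideanSpace.norm_eq, Real.norm_eq_abs] using
    Real.sum_mul_le_sqrt_mul_sqrt Finset.univ (fun i => |x i|) (fun i => |y i|)

noncomputable def dualFilter {d : ℕ} (a : ℕ → ℝ) (w : EuclideanSpace ℝ (Fin d))
    (τ : Tup d) : ℝ :=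
  a τ.1 * Real.sqrt 2 ^ (τ.1 + 1) * ∏ i, w (τ.2 i)

section dualFilter

variable {d : ℕ} (a : ℕ → ℝ) (w : EuclideanSpace ℝ (Fin d))

lemma sum_dualFilter_sq (j : ℕ) :
    ∑ k : Fin j → Fin d, dualFilter a w ⟨j, k⟩ ^ 2 = 2 ^ (j + 1) * a j ^ 2 * ‖w‖ ^ (2 * j) := by
  have hsq : ∀ k : Fin j → Fin d,
      dualFilter a w ⟨j, k⟩ ^ 2 = 2 ^ (j + 1) * a j ^ 2 * ∏ i, w (k i) ^ 2 := fun k => by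
    rw [dualFilter, mul_pow, mul_pow, ← pow_mul, mul_comm (j + 1), pow_mul,
      Real.sq_sqrt zero_le_two, Finset.prod_pow]
    ring
  rw [Finset.sum_congr rfl fun k _ => hsq k, ← Finset.mul_sum,
    sum_prod_apply_eq_sum_pow j fun x => w x ^ 2, pow_mul, ← EuclideanSpace.real_norm_sq_eq]

lemma hasSum_dualFilter_sq
    (hC : Summable fun j : ℕ => (2 : ℝ) ^ (j + 1) * a j ^ 2 * ‖w‖ ^ (2 * j)) :
    HasSum (fun τ => dualFilter a w τ ^ 2)
      (∑' j : ℕ, (2 : ℝ) ^ (j + 1) * a j ^ 2 * ‖w‖ ^ (2 * j)) := by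
  refine (hasSum_sigma_of_summable_abs_fiber ?_ ?_).2 <;>
    simp only [abs_sq, sum_dualFilter_sq]
  exacts [hC, hC.hasSum]

lemma dualFilter_mul_phi (z : EuclideanSpace ℝ (Fin d)) (τ : Tup d) :
    dualFilter a w τ * phi d z τ = a τ.1 * ∏ i, (w (τ.2 i) * z (τ.2 i)) := by
  have hcancel : Real.sqrt 2 ^ (τ.1 + 1) * (Real.sqrt 2)⁻¹ ^ (τ.1 + 1) = 1 := by
    rw [← mul_pow, mul_inv_cancel₀ (by positivity), one_pow]
  calc dualFilter a w τ * phi d z τ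
      = a τ.1 * (Real.sqrt 2 ^ (τ.1 + 1) * (Real.sqrt 2)⁻¹ ^ (τ.1 + 1))
          * ((∏ i, w (τ.2 i)) * ∏ i, z (τ.2 i)) := by
        rw [dualFilter, phi]; ring
    _ = a τ.1 * ∏ i, (w (τ.2 i) * z (τ.2 i)) := by
        rw [hcancel, ← Finset.prod_mul_distrib, mul_one]

lemma sum_dualFilter_mul_phi (z : EuclideanSpace ℝ (Fin d)) (j : ℕ) :
    ∑ k : Fin j → Fin d, dualFilter a w ⟨j, k⟩ * phi d z ⟨j, k⟩ = a j * ⟪w, z⟫ ^ j := by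
  simp only [dualFilter_mul_phi, ← Finset.mul_sum, sum_prod_apply_eq_sum_pow j fun x => w x * z x,
    PiLp.inner_apply, RCLike.inner_apply, conj_trivial, mul_comm (z _)]

lemma sum_abs_dualFilter_mul_phi (z : EuclideanSpace ℝ (Fin d)) (j : ℕ) :
    ∑ k : Fin j → Fin d, |dualFilter a w ⟨j, k⟩ * phi d z ⟨j, k⟩|
      = |a j| * (∑ x, |w x * z x|) ^ j := by
  simp only [dualFilter_mul_phi, abs_mul, Finset.abs_prod, ← Finset.mul_sum,
    sum_prod_apply_eq_sum_pow j fun x => |w x| * |z x|]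

lemma hasSum_dualFilter_mul_phi {σ : ℝ → ℝ}
    (hσ : ∀ t : ℝ, |t| ≤ ‖w‖ → HasSum (fun j : ℕ => a j * t ^ j) (σ t))
    (hC : Summable fun j : ℕ => (2 : ℝ) ^ (j + 1) * a j ^ 2 * ‖w‖ ^ (2 * j))
    (z : EuclideanSpace ℝ (Fin d)) (hz : ‖z‖ ≤ 1) :
    Summable (fun τ => |dualFilter a w τ * phi d z τ|) ∧
      HasSum (fun τ => dualFilter a w τ * phi d z τ) (σ ⟪w, z⟫) := by
  have hmajorant : Summable fun j => |a j| * ‖w‖ ^ j :=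
    (summable_of_summable_two_pow_mul_sq (b := fun j => a j * ‖w‖ ^ j)
      (by simpa only [mul_pow, ← pow_mul, mul_comm _ 2, mul_assoc] using hC)).abs.congr
      fun j => by rw [abs_mul, abs_pow, abs_norm]
  have hsum_le : ∑ x, |w x * z x| ≤ ‖w‖ :=
    (sum_abs_mul_le_norm_mul_norm w z).trans (mul_le_of_le_one_right (norm_nonneg w) hz)
  have hinner_le : |⟪w, z⟫| ≤ ‖w‖ :=
    (abs_real_inner_le_norm w z).trans (mul_le_of_le_one_right (norm_nonneg w) hz)
  refine hasSum_sigma_of_summable_abs_fiber ?_ ?_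
  · simp only [sum_abs_dualFilter_mul_phi]
    refine Summable.of_nonneg_of_le (fun j => by positivity) (fun j => ?_) hmajorant
    gcongr
  · simpa only [sum_dualFilter_mul_phi] using hσ _ hinner_le

end dualFilter

theorem filter_in_RKHS_inverse_polynomial_kernel_general
    (d : ℕ)
    (a : ℕ → ℝ) (σ : ℝ → ℝ)
    (w : EuclideanSpace ℝ (Fin d))
    (hσ : ∀ t : ℝ, |t| ≤ ‖w‖ → HasSum (fun j : ℕ => a j * t ^ j) (σ t))
    (hC : Summable fun j : ℕ => (2 : ℝ) ^ (j + 1) * (a j) ^ 2 * ‖w‖ ^ (2 * j)) :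
    ∃ wd : Tup d → ℝ,
      (Summable fun τ : Tup d => (wd τ) ^ 2) ∧
      Real.sqrt (∑' τ : Tup d, (wd τ) ^ 2) = Csigma a ‖w‖ ∧
      ∀ z : EuclideanSpace ℝ (Fin d), ‖z‖ ≤ 1 →
        (Summable fun τ : Tup d => |wd τ * phi d z τ|) ∧
        HasSum (fun τ : Tup d => wd τ * phi d z τ) (σ ⟪w, z⟫) := by
  have hsq := hasSum_dualFilter_sq a w hC
  exact ⟨dualFilter a w, hsq.summable, by rw [hsq.tsum_eq, Csigma],
    hasSum_dualFilter_mul_phi a w hσ hC⟩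

/-- filters lie in the RKHS of the inverse polynomial kernel.
If `σ(t) = ∑_j a_j t^j` (convergent on `[-‖w‖, ‖w‖]`) and `C_σ(‖w‖₂) < ∞`
(i.e. the defining series is summable), then there is `w◇ ∈ ℓ²(T)` with
`‖w◇‖_{ℓ²} = C_σ(‖w‖₂)` such that for every `z` in the closed unit ball,
`(w◇_τ φ(z)_τ)_τ` is absolutely summable with sum `σ(⟪w, z⟫)`. -/
theorem filter_in_RKHS_inverse_polynomial_kernel
    (d : ℕ) (hd : 1 ≤ d)
    (a : ℕ → ℝ) (σ : ℝ → ℝ)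
    (w : EuclideanSpace ℝ (Fin d))
    (hσ : ∀ t : ℝ, |t| ≤ ‖w‖ → HasSum (fun j : ℕ => a j * t ^ j) (σ t))
    (hC : Summable fun j : ℕ => (2 : ℝ) ^ (j + 1) * (a j) ^ 2 * ‖w‖ ^ (2 * j)) :
    ∃ wd : Tup d → ℝ,
      (Summable fun τ : Tup d => (wd τ) ^ 2) ∧
      Real.sqrt (∑' τ : Tup d, (wd τ) ^ 2) = Csigma a ‖w‖ ∧
      ∀ z : EuclideanSpace ℝ (Fin d), ‖z‖ ≤ 1 →
        (Summable fun τ : Tup d => |wd τ * phi d z τ|) ∧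
        HasSum (fun τ : Tup d => wd τ * phi d z τ) (σ ⟪w, z⟫) :=
  filter_in_RKHS_inverse_polynomial_kernel_general d a σ w hσ hC
end

section
/- For the sinusoid activation σ(t) = sin(t), whose power series coefficients are a_{2j+1} = (−1)^j/(2j+1)! and a_{2j} = 0, the quantity C^γ_σ(λ) associated to the Gaussian RBF kernel with parameter γ > 0 satisfies, for every λ ≥ 0: C^γ_σ(λ) = √(e^{2γ} ∑_{j=0}^∞ (1/(2j+1)!) (λ²/(2γ))^{2j+1}) ≤ exp(λ²/(4γ) + γ). In particular the series converges for every λ ≥ 0. -/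
/-!
Only the odd coefficients of `sin` survive, and on them the Gaussian weight
`(2j+1)! e^{2γ} / (2γ)^{2j+1}` cancels one of the two factorials in `a_{2j+1}²`, so the weighted
series is the Taylor series of `e^{2γ} sinh (λ² / 2γ)`. The bound is then `sinh ≤ exp`.
-/

/-- Power series coefficients of `sin`: `a_{2j+1} = (-1)^j/(2j+1)!`, `a_{2j} = 0`. -/
noncomputable def sinCoeff (j : ℕ) : ℝ :=
  if j % 2 = 1 then (-1 : ℝ) ^ (j / 2) / (Nat.factorial j : ℝ) else 0

theorem sinCoeff_even (n : ℕ) : sinCoeff (2 * n) = 0 := by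
  simp [sinCoeff]

theorem sinCoeff_odd (n : ℕ) :
    sinCoeff (2 * n + 1) = (-1 : ℝ) ^ n / (Nat.factorial (2 * n + 1) : ℝ) := by
  have hmod : (2 * n + 1) % 2 = 1 := by omega
  have hdiv : (2 * n + 1) / 2 = n := by omega
  simp [sinCoeff, hmod, hdiv]

theorem hasSum_of_odd_of_even_eq_zero {M : Type*} [AddCommMonoid M] [TopologicalSpace M]
    [ContinuousAdd M] {f : ℕ → M} {a : M} (h_even : ∀ n, f (2 * n) = 0)
    (h_odd : HasSum (fun n ↦ f (2 * n + 1)) a) :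
    HasSum f a := by
  have h_even' : HasSum (fun n ↦ f (2 * n)) 0 := by simpa only [h_even] using hasSum_zero
  rw [← zero_add a]
  exact h_even'.even_add_odd h_odd

theorem hasSum_sinCoeff_mul_pow (t : ℝ) :
    HasSum (fun j : ℕ ↦ sinCoeff j * t ^ j) (Real.sin t) := by
  refine hasSum_of_odd_of_even_eq_zero (by simp [sinCoeff_even]) ?_
  simpa only [sinCoeff_odd, div_mul_eq_mul_div] using Real.hasSum_sin t

theorem hasSum_sinh_div_factorial (x : ℝ) :
    HasSum (fun n : ℕ ↦ (1 / (Nat.factorial (2 * n + 1) : ℝ)) * x ^ (2 * n + 1))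
      (Real.sinh x) := by
  simpa only [one_div_mul_eq_div] using Real.hasSum_sinh x

theorem factorial_div_pow_mul_sinCoeff_sq_odd (C lam : ℝ) {c : ℝ} (hc : c ≠ 0) (n : ℕ) :
    ((Nat.factorial (2 * n + 1) : ℝ) * C / c ^ (2 * n + 1)) * sinCoeff (2 * n + 1) ^ 2
        * lam ^ (2 * (2 * n + 1))
      = C * ((1 / (Nat.factorial (2 * n + 1) : ℝ)) * (lam ^ 2 / c) ^ (2 * n + 1)) := by
  have hfac : (Nat.factorial (2 * n + 1) : ℝ) ≠ 0 := by positivity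
  rw [sinCoeff_odd, div_pow, ← pow_mul, mul_comm n 2, pow_mul, neg_one_sq, one_pow, pow_mul,
    div_pow]
  field_simp

theorem hasSum_factorial_div_pow_mul_sinCoeff_sq (C lam : ℝ) {c : ℝ} (hc : c ≠ 0) :
    HasSum (fun j : ℕ ↦ ((Nat.factorial j : ℝ) * C / c ^ j) * sinCoeff j ^ 2 * lam ^ (2 * j))
      (C * Real.sinh (lam ^ 2 / c)) := by
  refine hasSum_of_odd_of_even_eq_zero (by simp [sinCoeff_even]) ?_
  simp only [factorial_div_pow_mul_sinCoeff_sq_odd C lam hc]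
  exact (hasSum_sinh_div_factorial _).mul_left C

theorem sqrt_exp_mul_sinh_le (a b : ℝ) :
    Real.sqrt (Real.exp a * Real.sinh b) ≤ Real.exp (b / 2 + a / 2) := by
  have hsinh : Real.sinh b ≤ Real.exp b := by
    linarith [Real.sinh_add_cosh b, Real.cosh_pos b]
  calc Real.sqrt (Real.exp a * Real.sinh b)
      ≤ Real.sqrt (Real.exp (b + a)) := by
        rw [Real.exp_add, mul_comm (Real.exp b)]
        gcongr
    _ = Real.exp (b / 2 + a / 2) := by
        rw [← Real.exp_half, add_div]

theorem Csigma_sin_gaussian_kernel_general (γ : ℝ) (hγ : 0 < γ) (lam : ℝ) :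
    (∀ t : ℝ, HasSum (fun j : ℕ => sinCoeff j * t ^ j) (Real.sin t)) ∧
    (Summable fun j : ℕ =>
      ((Nat.factorial j : ℝ) * Real.exp (2 * γ) / (2 * γ) ^ j)
        * (sinCoeff j) ^ 2 * lam ^ (2 * j)) ∧
    (Summable fun j : ℕ =>
      (1 / (Nat.factorial (2 * j + 1) : ℝ)) * (lam ^ 2 / (2 * γ)) ^ (2 * j + 1)) ∧
    Real.sqrt (∑' j : ℕ,
        ((Nat.factorial j : ℝ) * Real.exp (2 * γ) / (2 * γ) ^ j)
          * (sinCoeff j) ^ 2 * lam ^ (2 * j))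
      = Real.sqrt (Real.exp (2 * γ) * ∑' j : ℕ,
          (1 / (Nat.factorial (2 * j + 1) : ℝ)) * (lam ^ 2 / (2 * γ)) ^ (2 * j + 1)) ∧
    Real.sqrt (Real.exp (2 * γ) * ∑' j : ℕ,
        (1 / (Nat.factorial (2 * j + 1) : ℝ)) * (lam ^ 2 / (2 * γ)) ^ (2 * j + 1))
      ≤ Real.exp (lam ^ 2 / (4 * γ) + γ) := by
  have hsin := hasSum_sinh_div_factorial (lam ^ 2 / (2 * γ))
  have hweighted := hasSum_factorial_div_pow_mul_sinCoeff_sq (Real.exp (2 * γ)) lam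
    (mul_ne_zero two_ne_zero hγ.ne')
  refine ⟨hasSum_sinCoeff_mul_pow, hweighted.summable, hsin.summable, ?_, ?_⟩
  · rw [hweighted.tsum_eq, hsin.tsum_eq]
  · rw [hsin.tsum_eq]
    convert sqrt_exp_mul_sinh_le (2 * γ) (lam ^ 2 / (2 * γ)) using 2
    field_simp
    ring

/-- for the sinusoid activation `σ = sin`, the quantity
`C^γ_σ(λ) = √(∑_j (j! e^{2γ}/(2γ)^j) a_j² λ^{2j})` associated to the Gaussian RBF
kernel with parameter `γ > 0` satisfies, for every `λ ≥ 0`,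
`C^γ_σ(λ) = √(e^{2γ} ∑_j (1/(2j+1)!) (λ²/(2γ))^{2j+1}) ≤ exp(λ²/(4γ) + γ)`;
in particular the series converges. -/
theorem Csigma_sin_gaussian_kernel (γ : ℝ) (hγ : 0 < γ) (lam : ℝ) (hlam : 0 ≤ lam) :
    (∀ t : ℝ, HasSum (fun j : ℕ => sinCoeff j * t ^ j) (Real.sin t)) ∧
    (Summable fun j : ℕ =>
      ((Nat.factorial j : ℝ) * Real.exp (2 * γ) / (2 * γ) ^ j)
        * (sinCoeff j) ^ 2 * lam ^ (2 * j)) ∧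
    (Summable fun j : ℕ =>
      (1 / (Nat.factorial (2 * j + 1) : ℝ)) * (lam ^ 2 / (2 * γ)) ^ (2 * j + 1)) ∧
    Real.sqrt (∑' j : ℕ,
        ((Nat.factorial j : ℝ) * Real.exp (2 * γ) / (2 * γ) ^ j)
          * (sinCoeff j) ^ 2 * lam ^ (2 * j))
      = Real.sqrt (Real.exp (2 * γ) * ∑' j : ℕ,
          (1 / (Nat.factorial (2 * j + 1) : ℝ)) * (lam ^ 2 / (2 * γ)) ^ (2 * j + 1)) ∧
    Real.sqrt (Real.exp (2 * γ) * ∑' j : ℕ,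
        (1 / (Nat.factorial (2 * j + 1) : ℝ)) * (lam ^ 2 / (2 * γ)) ^ (2 * j + 1))
      ≤ Real.exp (lam ^ 2 / (4 * γ) + γ) :=
  Csigma_sin_gaussian_kernel_general γ hγ lam
end

section
/- (Nuclear norm bound used in the convex relaxation.) Let r, d₁, d₂, P be positive integers and B₁, B₂ ≥ 0. Let w_1, …, w_r ∈ ℝ^{d₁} with ‖w_j‖₂ ≤ B₁ for each j, and for each k ∈ {1,…,d₂} and j ∈ {1,…,r} let α_{k,j} ∈ ℝ^P with ‖α_{k,j}‖₂ ≤ B₂. Define A_k = ∑_{j=1}^r w_j α_{k,j}ᵀ ∈ ℝ^{d₁ × P} and let A = (A_1, …, A_{d₂}) ∈ ℝ^{d₁ × P d₂} be their horizontal concatenation. Then A has rank at most r and its nuclear norm satisfies ‖A‖_* ≤ B₁ B₂ r √(d₂). -/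
/-!
Write `A = ∑ⱼ wⱼ βⱼᵀ`, where `βⱼ ∈ ℝ^{d₂ P}` concatenates `α_{1,j}, …, α_{d₂,j}`, so that
`‖βⱼ‖ ≤ √d₂ B₂`. The rank bound is then immediate, and the nuclear norm bound follows from
`‖∑ⱼ uⱼ vⱼᵀ‖_* ≤ ∑ⱼ ‖uⱼ‖ ‖vⱼ‖`. For the latter let `(bᵢ)` be an orthonormal eigenbasis of `AᵀA`:
the vectors `A bᵢ` are pairwise orthogonal with `‖A bᵢ‖ = √λᵢ`, so `‖A‖_* = ∑ᵢ ‖A bᵢ‖`. Pairing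
`A bᵢ` with its normalization `xᵢ` (zero if `A bᵢ = 0`) gives
`‖A bᵢ‖ = ∑ⱼ ⟪vⱼ, bᵢ⟫ ⟪xᵢ, uⱼ⟫`, and for each `j` Cauchy–Schwarz in `i`, Parseval for `(bᵢ)` and
Bessel for `(xᵢ)` bound the sum over `i` by `‖vⱼ‖ ‖uⱼ‖`.
-/

/-- The nuclear norm (sum of singular values) of a real rectangular matrix:
the trace of `(AᵀA)^{1/2}`. -/
noncomputable def nuclearNorm {m n : Type*} [Fintype m] [Fintype n] [DecidableEq n]
    (A : Matrix m n ℝ) : ℝ :=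
  ((Matrix.posSemidef_conjTranspose_mul_self A).1.eigenvectorUnitary.1 *
    Matrix.diagonal (Real.sqrt ∘ (Matrix.posSemidef_conjTranspose_mul_self A).1.eigenvalues) *
    (star (Matrix.posSemidef_conjTranspose_mul_self A).1.eigenvectorUnitary : Matrix n n ℝ)).trace

open scoped RealInnerProductSpace
open Matrix NormedSpace

section InnerProductSpace

variable {ι κ ρ E F : Type*} [NormedAddCommGroup E] [InnerProductSpace ℝ E]
  [NormedAddCommGroup F] [InnerProductSpace ℝ F]

theorem orthonormal_normalize_of_ne_zero {y : ι → F}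
    (hy : Pairwise fun i j => ⟪y i, y j⟫ = 0) :
    Orthonormal ℝ fun i : {i // y i ≠ 0} => normalize (y i) := by
  refine ⟨fun i => norm_normalize_eq_one_iff.mpr i.2, fun i j hij => ?_⟩
  simp only [NormedSpace.normalize, real_inner_smul_left, real_inner_smul_right]
  rw [hy (Subtype.coe_ne_coe.mpr hij), mul_zero, mul_zero]

theorem sum_sq_inner_normalize_le [Fintype ι] {y : ι → F}
    (hy : Pairwise fun i j => ⟪y i, y j⟫ = 0) (u : F) :
    ∑ i, ⟪normalize (y i), u⟫ ^ 2 ≤ ‖u‖ ^ 2 := by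
  classical
  rw [← Fintype.sum_subtype_add_sum_subtype (fun i => y i ≠ 0)]
  have hzero : ∑ i : {i // ¬y i ≠ 0}, ⟪normalize (y i), u⟫ ^ 2 = 0 :=
    Finset.sum_eq_zero fun i _ => by simp [not_not.mp i.2]
  simpa [hzero] using
    (orthonormal_normalize_of_ne_zero hy).sum_inner_products_le (s := .univ) u

theorem real_inner_normalize_self (y : F) : ⟪normalize y, y⟫ = ‖y‖ := by
  rw [NormedSpace.normalize, real_inner_smul_left, real_inner_self_eq_norm_sq]
  rcases eq_or_ne ‖y‖ 0 with h | h
  · simp [h]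
  · field_simp

theorem sum_norm_apply_orthonormalBasis_le [Fintype κ] [Fintype ρ]
    (b : OrthonormalBasis κ ℝ E) (T : E → F) (hT : Pairwise fun i k => ⟪T (b i), T (b k)⟫ = 0)
    (u : ρ → F) (v : ρ → E) (hTuv : ∀ x, T x = ∑ j, ⟪v j, x⟫ • u j) :
    ∑ i, ‖T (b i)‖ ≤ ∑ j, ‖u j‖ * ‖v j‖ := by
  set x := fun i => normalize (T (b i))
  have hexpand : ∀ i, ‖T (b i)‖ = ∑ j, ⟪v j, b i⟫ * ⟪x i, u j⟫ := fun i => by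
    rw [← real_inner_normalize_self (T (b i))]
    nth_rw 2 [hTuv (b i)]
    simp only [x, inner_sum, real_inner_smul_right]
  calc ∑ i, ‖T (b i)‖ = ∑ j, ∑ i, ⟪v j, b i⟫ * ⟪x i, u j⟫ := by
        simp only [hexpand]; exact Finset.sum_comm
    _ ≤ ∑ j, √(∑ i, ⟪v j, b i⟫ ^ 2) * √(∑ i, ⟪x i, u j⟫ ^ 2) :=
        Finset.sum_le_sum fun j _ => Real.sum_mul_le_sqrt_mul_sqrt _ _ _
    _ ≤ ∑ j, √(‖v j‖ ^ 2) * √(‖u j‖ ^ 2) := by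
        gcongr with j
        · exact (b.sum_sq_inner_left (v j)).le
        · exact sum_sq_inner_normalize_le hT (u j)
    _ = ∑ j, ‖u j‖ * ‖v j‖ := by
        simp only [Real.sqrt_sq (norm_nonneg _), mul_comm]

end InnerProductSpace

theorem EuclideanSpace.norm_toLp_uncurry_le {ι κ : Type*} [Fintype ι] [Fintype κ]
    (x : ι → EuclideanSpace ℝ κ) {B : ℝ} (hB : 0 ≤ B) (hx : ∀ i, ‖x i‖ ≤ B) :
    ‖WithLp.toLp 2 (fun q : ι × κ => x q.1 q.2)‖ ≤ √(Fintype.card ι) * B := by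
  have hsq : ‖WithLp.toLp 2 (fun q : ι × κ => x q.1 q.2)‖ ^ 2 = ∑ i, ‖x i‖ ^ 2 := by
    simp only [EuclideanSpace.real_norm_sq_eq, Fintype.sum_prod_type]
  rw [← sq_le_sq₀ (norm_nonneg _) (by positivity), hsq, mul_pow,
    Real.sq_sqrt (Nat.cast_nonneg _)]
  simpa using Finset.sum_le_sum fun i (_ : i ∈ Finset.univ) =>
    pow_le_pow_left₀ (norm_nonneg _) (hx i) 2

theorem Matrix.rank_sum_vecMulVec_le {m n ρ R : Type*} [Fintype n] [Fintype ρ] [CommRing R]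
    [StrongRankCondition R] (u : ρ → m → R) (v : ρ → n → R) :
    (∑ j, vecMulVec (u j) (v j)).rank ≤ Fintype.card ρ := by
  have hfactor : ∑ j, vecMulVec (u j) (v j) = (of fun i j => u j i) * of v := by
    ext i k
    simp [mul_apply, vecMulVec_apply, Matrix.sum_apply]
  rw [hfactor]
  exact (rank_mul_le_left _ _).trans (rank_le_card_width _)

section NuclearNorm

variable {m n : Type*} [Fintype m] [Fintype n] [DecidableEq n]

theorem Matrix.inner_toEuclideanLin_eigenvectorBasis (A : Matrix m n ℝ)
    (hA : (Aᴴ * A).IsHermitian) (i k : n) :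
    ⟪toEuclideanLin A (hA.eigenvectorBasis i), toEuclideanLin A (hA.eigenvectorBasis k)⟫ =
      hA.eigenvalues k * ⟪hA.eigenvectorBasis i, hA.eigenvectorBasis k⟫ := by
  classical
  rw [← LinearMap.adjoint_inner_right, ← toEuclideanLin_conjTranspose_eq_adjoint,
    ← LinearMap.comp_apply, ← toLpLin_mul_same, toLpLin_apply, hA.mulVec_eigenvectorBasis,
    WithLp.toLp_smul, WithLp.toLp_ofLp, real_inner_smul_right]

theorem nuclearNorm_eq_sum_sqrt_eigenvalues (A : Matrix m n ℝ) (hA : (Aᴴ * A).IsHermitian) :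
    nuclearNorm A = ∑ i, √(hA.eigenvalues i) := by
  rw [nuclearNorm, trace_mul_cycle, Unitary.coe_star_mul_self, one_mul, trace_diagonal]
  rfl

theorem nuclearNorm_eq_sum_norm_toEuclideanLin_eigenvectorBasis (A : Matrix m n ℝ)
    (hA : (Aᴴ * A).IsHermitian) :
    nuclearNorm A = ∑ i, ‖toEuclideanLin A (hA.eigenvectorBasis i)‖ := by
  rw [nuclearNorm_eq_sum_sqrt_eigenvalues A hA]
  refine Finset.sum_congr rfl fun i _ => ?_
  rw [norm_eq_sqrt_real_inner, inner_toEuclideanLin_eigenvectorBasis,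
    real_inner_self_eq_norm_sq, hA.eigenvectorBasis.orthonormal.1 i, one_pow, mul_one]

theorem nuclearNorm_sum_vecMulVec_le {ρ : Type*} [Fintype ρ] (u : ρ → EuclideanSpace ℝ m)
    (v : ρ → EuclideanSpace ℝ n) :
    nuclearNorm (∑ j, vecMulVec (u j) (v j)) ≤ ∑ j, ‖u j‖ * ‖v j‖ := by
  set A := ∑ j, vecMulVec (u j) (v j)
  have hA := isHermitian_conjTranspose_mul_self A
  rw [nuclearNorm_eq_sum_norm_toEuclideanLin_eigenvectorBasis A hA]
  refine sum_norm_apply_orthonormalBasis_le hA.eigenvectorBasis (toEuclideanLin A) ?_ u v ?_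
  · intro i k hik
    rw [inner_toEuclideanLin_eigenvectorBasis, hA.eigenvectorBasis.orthonormal.2 hik, mul_zero]
  · intro x
    ext a
    simp only [A, toLpLin_apply, PiLp.toLp_apply, sum_mulVec, vecMulVec_mulVec, PiLp.inner_apply]
    simp [Finset.sum_apply, dotProduct, mul_comm]

end NuclearNorm

theorem ccnn_nuclear_norm_bound_general
    (r d1 d2 P : ℕ)
    (B1 B2 : ℝ) (hB1 : 0 ≤ B1) (hB2 : 0 ≤ B2)
    (w : Fin r → EuclideanSpace ℝ (Fin d1)) (hw : ∀ j, ‖w j‖ ≤ B1)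
    (α : Fin d2 → Fin r → EuclideanSpace ℝ (Fin P)) (hα : ∀ k j, ‖α k j‖ ≤ B2)
    (A : Matrix (Fin d1) (Fin d2 × Fin P) ℝ)
    (hA : ∀ i k p, A i (k, p) = ∑ j : Fin r, w j i * α k j p) :
    A.rank ≤ r ∧ nuclearNorm A ≤ B1 * B2 * r * Real.sqrt d2 := by
  set β : Fin r → EuclideanSpace ℝ (Fin d2 × Fin P) :=
    fun j => WithLp.toLp 2 fun q => α q.1 j q.2
  have hβ : ∀ j, ‖β j‖ ≤ √d2 * B2 := fun j => by
    simpa using EuclideanSpace.norm_toLp_uncurry_le (α · j) hB2 (hα · j)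
  have hA_eq : A = ∑ j, vecMulVec (w j) (β j) := by
    ext i ⟨k, p⟩
    simp [hA, β, Matrix.sum_apply, vecMulVec_apply]
  refine ⟨?_, ?_⟩
  · simpa [hA_eq] using rank_sum_vecMulVec_le (fun j => ⇑(w j)) (fun j => ⇑(β j))
  · calc nuclearNorm A ≤ ∑ j, ‖w j‖ * ‖β j‖ := hA_eq ▸ nuclearNorm_sum_vecMulVec_le w β
      _ ≤ ∑ _j : Fin r, B1 * (√d2 * B2) :=
        Finset.sum_le_sum fun j _ => mul_le_mul (hw j) (hβ j) (norm_nonneg _) hB1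
      _ = B1 * B2 * r * √d2 := by
        rw [Finset.sum_const, Finset.card_univ, Fintype.card_fin, nsmul_eq_mul]; ring

/-- nuclear norm bound used in the convex relaxation. If
`A_k = ∑_j w_j α_{k,j}ᵀ` with `‖w_j‖₂ ≤ B₁` and `‖α_{k,j}‖₂ ≤ B₂`, then the
horizontal concatenation `A = (A_1, …, A_{d₂})` has rank at most `r` and nuclear
norm at most `B₁ B₂ r √d₂`. -/
theorem ccnn_nuclear_norm_bound
    (r d1 d2 P : ℕ) (hr : 0 < r) (hd1 : 0 < d1) (hd2 : 0 < d2) (hP : 0 < P)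
    (B1 B2 : ℝ) (hB1 : 0 ≤ B1) (hB2 : 0 ≤ B2)
    (w : Fin r → EuclideanSpace ℝ (Fin d1)) (hw : ∀ j, ‖w j‖ ≤ B1)
    (α : Fin d2 → Fin r → EuclideanSpace ℝ (Fin P)) (hα : ∀ k j, ‖α k j‖ ≤ B2)
    (A : Matrix (Fin d1) (Fin d2 × Fin P) ℝ)
    (hA : ∀ i k p, A i (k, p) = ∑ j : Fin r, w j i * α k j p) :
    A.rank ≤ r ∧ nuclearNorm A ≤ B1 * B2 * r * Real.sqrt d2 :=
  ccnn_nuclear_norm_bound_general r d1 d2 P B1 B2 hB1 hB2 w hw α hα A hA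
end

section
/- (The relaxed class contains the CNN class; Lemma on CNN ⊂ RCNN.) Fix d₀, d₁, P, r and radii B₁, B₂ > 0. Let z_1, …, z_P : ℝ^{d₀} → ℝ^{d₁} be patch maps satisfying ‖z_p(x)‖₂ ≤ 1 for all x and p. Let σ(t) = ∑_{j=0}^∞ a_j t^j be an activation with C_σ(B₁) < ∞, where C_σ(λ) = √(∑_{j=0}^∞ 2^{j+1} a_j² λ^{2j}). Consider a CNN f(x) = ∑_{j=1}^r ∑_{p=1}^P α_{j,p} σ(⟨w_j, z_p(x)⟩) with ‖w_j‖₂ ≤ B₁ and ‖α_j‖₂ ≤ B₂ for all j (where α_j = (α_{j,1},…,α_{j,P})). Then there exist square-summable families β_1, …, β_r ∈ ℓ²(T), indexed by the set T of finite tuples from {1,…,d₁}, such that ‖β_j‖_{ℓ²} ≤ C_σ(B₁) for each j, f(x) = ∑_{j=1}^r ∑_{p=1}^P α_{j,p} ⟨β_j, φ(z_p(x))⟩ for every x ∈ ℝ^{d₀} (each inner product being an absolutely convergent sum over T), and ∑_{j=1}^r ‖α_j‖₂ ‖β_j‖_{ℓ²} ≤ C_σ(B₁) B₂ r. -/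
open scoped RealInnerProductSpace

lemma pow_sum_fin {d : ℕ} (g : Fin d → ℝ) (j : ℕ) :
    (∑ m, g m) ^ j = ∑ k : Fin j → Fin d, ∏ i, g (k i) := by
  rw [Finset.sum_pow', Fintype.piFinset_univ]

lemma norm_sq_euclid {d : ℕ} (x : EuclideanSpace ℝ (Fin d)) :
    ∑ m, x m ^ 2 = ‖x‖ ^ 2 := by
  rw [EuclideanSpace.norm_eq, Real.sq_sqrt (by positivity)]
  simp [sq_abs]

lemma inner_euclid {d : ℕ} (x y : EuclideanSpace ℝ (Fin d)) :
    ⟪x, y⟫ = ∑ m, x m * y m := by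
  simp [PiLp.inner_apply, RCLike.inner_apply, mul_comm]

/-- summability over `Tup d` from summability of fiber sums, for nonneg functions. -/
lemma summable_tup {d : ℕ} (F : Tup d → ℝ) (hF : ∀ τ, 0 ≤ F τ)
    (h : Summable fun j : ℕ => ∑ k : Fin j → Fin d, F ⟨j, k⟩) : Summable F := by
  refine (summable_sigma_of_nonneg hF).2 ⟨fun j => (hasSum_fintype _).summable, ?_⟩
  simpa only [tsum_fintype] using h

lemma tsum_tup {d : ℕ} (F : Tup d → ℝ) (h : Summable F) :
    ∑' τ : Tup d, F τ = ∑' j : ℕ, ∑ k : Fin j → Fin d, F ⟨j, k⟩ := by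
  rw [Summable.tsum_sigma' (fun j => (hasSum_fintype _).summable) h]
  simp only [tsum_fintype]

/-- the relaxed class contains the CNN class. Any CNN
`f(x) = ∑_j ∑_p α_{j,p} σ(⟪w_j, z_p(x)⟩)` with `‖w_j‖₂ ≤ B₁`, `‖α_j‖₂ ≤ B₂` can be
rewritten with RKHS filters: there are `β_j ∈ ℓ²(T)` with `‖β_j‖_{ℓ²} ≤ C_σ(B₁)`,
`f(x) = ∑_j ∑_p α_{j,p} ⟪β_j, φ(z_p(x))⟫` (each inner product an absolutely
convergent sum over `T`), and `∑_j ‖α_j‖₂ ‖β_j‖_{ℓ²} ≤ C_σ(B₁) B₂ r`. -/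
theorem cnn_subset_rcnn
    (d0 d1 P r : ℕ) (B1 B2 : ℝ) (hB1 : 0 < B1) (hB2 : 0 < B2)
    (z : Fin P → EuclideanSpace ℝ (Fin d0) → EuclideanSpace ℝ (Fin d1))
    (hz : ∀ p x, ‖z p x‖ ≤ 1)
    (a : ℕ → ℝ) (σ : ℝ → ℝ)
    (hσ : ∀ t : ℝ, |t| ≤ B1 → HasSum (fun j : ℕ => a j * t ^ j) (σ t))
    (hC : Summable fun j : ℕ => (2 : ℝ) ^ (j + 1) * (a j) ^ 2 * B1 ^ (2 * j))
    (w : Fin r → EuclideanSpace ℝ (Fin d1)) (hw : ∀ j, ‖w j‖ ≤ B1)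
    (α : Fin r → EuclideanSpace ℝ (Fin P)) (hα : ∀ j, ‖α j‖ ≤ B2)
    (f : EuclideanSpace ℝ (Fin d0) → ℝ)
    (hf : ∀ x, f x = ∑ j : Fin r, ∑ p : Fin P, α j p * σ ⟪w j, z p x⟫) :
    ∃ β : Fin r → Tup d1 → ℝ,
      (∀ j, Summable fun τ : Tup d1 => (β j τ) ^ 2) ∧
      (∀ j, Real.sqrt (∑' τ : Tup d1, (β j τ) ^ 2) ≤ Csigma a B1) ∧
      (∀ j x p, Summable fun τ : Tup d1 => |β j τ * phi d1 (z p x) τ|) ∧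
      (∀ x, f x = ∑ j : Fin r, ∑ p : Fin P,
        α j p * ∑' τ : Tup d1, β j τ * phi d1 (z p x) τ) ∧
      (∑ j : Fin r, ‖α j‖ * Real.sqrt (∑' τ : Tup d1, (β j τ) ^ 2))
        ≤ Csigma a B1 * B2 * r := by
  classical
  set β : Fin r → Tup d1 → ℝ :=
    fun j τ => a τ.1 * (Real.sqrt 2) ^ (τ.1 + 1) * ∏ i, w j (τ.2 i) with hβ
  -- fiber sums of β²
  have hβsq : ∀ (j : Fin r) (n : ℕ),
      ∑ k : Fin n → Fin d1, (β j ⟨n, k⟩) ^ 2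
        = 2 ^ (n + 1) * (a n) ^ 2 * ‖w j‖ ^ (2 * n) := by
    intro j n
    have h2 : ((Real.sqrt 2 : ℝ) ^ (n + 1)) ^ 2 = 2 ^ (n + 1) := by
      rw [← pow_mul, mul_comm (n+1) 2, pow_mul, Real.sq_sqrt (by norm_num)]
    have : ∀ k : Fin n → Fin d1,
        (β j ⟨n, k⟩) ^ 2 = (2 ^ (n + 1) * (a n) ^ 2) * ∏ i, (w j (k i)) ^ 2 := by
      intro k
      simp only [hβ]
      rw [mul_pow, mul_pow, h2, ← Finset.prod_pow]
      ring
    rw [Finset.sum_congr rfl (fun k _ => this k), ← Finset.mul_sum,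
        ← pow_sum_fin (fun m => (w j m) ^ 2) n, norm_sq_euclid, ← pow_mul]
  -- termwise comparison for fiber sums of β²
  have hcmp : ∀ (j : Fin r) (n : ℕ),
      2 ^ (n + 1) * (a n) ^ 2 * ‖w j‖ ^ (2 * n)
        ≤ (2 : ℝ) ^ (n + 1) * (a n) ^ 2 * B1 ^ (2 * n) := by
    intro j n
    have h := pow_le_pow_left₀ (norm_nonneg (w j)) (hw j) (2 * n)
    exact mul_le_mul_of_nonneg_left h (by positivity)
  have hfibsum : ∀ j : Fin r,
      Summable fun n : ℕ => (2:ℝ) ^ (n + 1) * (a n) ^ 2 * ‖w j‖ ^ (2 * n) :=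
    fun j => Summable.of_nonneg_of_le (fun n => by positivity) (hcmp j) hC
  have hsumβ : ∀ j, Summable fun τ : Tup d1 => (β j τ) ^ 2 := by
    intro j
    apply summable_tup _ (fun τ => sq_nonneg _)
    simpa only [hβsq j] using hfibsum j
  -- norm bound
  have hle : ∀ j, Real.sqrt (∑' τ : Tup d1, (β j τ) ^ 2) ≤ Csigma a B1 := by
    intro j
    apply Real.sqrt_le_sqrt
    rw [tsum_tup _ (hsumβ j)]
    simp only [hβsq j]
    exact Summable.tsum_le_tsum (hcmp j) (hfibsum j) hC
  -- fiber sums of φ²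
  have hφsq : ∀ (p : Fin P) (x) (n : ℕ),
      ∑ k : Fin n → Fin d1, (phi d1 (z p x) ⟨n, k⟩) ^ 2
        = (2:ℝ)⁻¹ ^ (n + 1) * ‖z p x‖ ^ (2 * n) := by
    intro p x n
    have h2 : (((Real.sqrt 2 : ℝ))⁻¹ ^ (n + 1)) ^ 2 = (2:ℝ)⁻¹ ^ (n + 1) := by
      rw [← pow_mul, mul_comm (n+1) 2, pow_mul, inv_pow,
        Real.sq_sqrt (by norm_num)]
    have : ∀ k : Fin n → Fin d1,
        (phi d1 (z p x) ⟨n, k⟩) ^ 2 = (2:ℝ)⁻¹ ^ (n + 1) * ∏ i, (z p x (k i)) ^ 2 := by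
      intro k
      simp only [phi]
      rw [mul_pow, h2, ← Finset.prod_pow]
    rw [Finset.sum_congr rfl (fun k _ => this k), ← Finset.mul_sum,
        ← pow_sum_fin (fun m => (z p x m) ^ 2) n, norm_sq_euclid, ← pow_mul]
  have hgeo : Summable fun n : ℕ => (2:ℝ)⁻¹ ^ (n + 1) := by
    simpa [pow_succ] using
      (summable_geometric_of_lt_one (by norm_num : (0:ℝ) ≤ 2⁻¹) (by norm_num)).mul_right 2⁻¹
  have hsumφ : ∀ (p : Fin P) x, Summable fun τ : Tup d1 => (phi d1 (z p x) τ) ^ 2 := by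
    intro p x
    apply summable_tup _ (fun τ => sq_nonneg _)
    simp only [hφsq p x]
    apply Summable.of_nonneg_of_le (fun n => by positivity) _ hgeo
    intro n
    calc (2:ℝ)⁻¹ ^ (n + 1) * ‖z p x‖ ^ (2 * n)
        ≤ (2:ℝ)⁻¹ ^ (n + 1) * 1 := by
          gcongr
          exact pow_le_one₀ (norm_nonneg _) (hz p x)
      _ = (2:ℝ)⁻¹ ^ (n + 1) := mul_one _
  -- absolute summability of β·φ
  have habs : ∀ j x p, Summable fun τ : Tup d1 => |β j τ * phi d1 (z p x) τ| := by
    intro j x p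
    apply Summable.of_nonneg_of_le (fun τ => abs_nonneg _) _
      (((hsumβ j).add (hsumφ p x)).div_const 2)
    intro τ
    rw [abs_mul]
    nlinarith [sq_abs (β j τ), sq_abs (phi d1 (z p x) τ),
      sq_nonneg (|β j τ| - |phi d1 (z p x) τ|)]
  -- the key tsum identity
  have hkey : ∀ (j : Fin r) (p : Fin P) x,
      ∑' τ : Tup d1, β j τ * phi d1 (z p x) τ = σ ⟪w j, z p x⟫ := by
    intro j p x
    have hs : Summable fun τ : Tup d1 => β j τ * phi d1 (z p x) τ :=
      summable_abs_iff.1 (habs j x p)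
    rw [tsum_tup _ hs]
    have hfib : ∀ n : ℕ,
        ∑ k : Fin n → Fin d1, β j ⟨n, k⟩ * phi d1 (z p x) ⟨n, k⟩
          = a n * ⟪w j, z p x⟫ ^ n := by
      intro n
      have h2 : ((Real.sqrt 2 : ℝ)) ^ (n + 1) * ((Real.sqrt 2 : ℝ))⁻¹ ^ (n + 1) = 1 := by
        rw [← mul_pow, mul_inv_cancel₀ (by positivity), one_pow]
      have h1 : ∀ k : Fin n → Fin d1,
          β j ⟨n, k⟩ * phi d1 (z p x) ⟨n, k⟩
            = a n * ∏ i, (w j (k i) * z p x (k i)) := by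
        intro k
        simp only [hβ, phi]
        calc a n * Real.sqrt 2 ^ (n + 1) * (∏ i, w j (k i)) *
              ((Real.sqrt 2)⁻¹ ^ (n + 1) * ∏ i, z p x (k i))
            = a n * (Real.sqrt 2 ^ (n + 1) * (Real.sqrt 2)⁻¹ ^ (n + 1)) *
              ((∏ i, w j (k i)) * ∏ i, z p x (k i)) := by ring
          _ = a n * ∏ i, (w j (k i) * z p x (k i)) := by
              rw [h2, ← Finset.prod_mul_distrib]; ring
      rw [Finset.sum_congr rfl (fun k _ => h1 k), ← Finset.mul_sum,
        ← pow_sum_fin (fun m => w j m * z p x m) n, ← inner_euclid]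
    simp only [hfib]
    have ht : |⟪w j, z p x⟫| ≤ B1 := by
      calc |⟪w j, z p x⟫| ≤ ‖w j‖ * ‖z p x‖ := abs_real_inner_le_norm _ _
        _ ≤ B1 * 1 := mul_le_mul (hw j) (hz p x) (norm_nonneg _) hB1.le
        _ = B1 := mul_one _
    exact (hσ _ ht).tsum_eq
  refine ⟨β, hsumβ, hle, habs, ?_, ?_⟩
  · intro x
    rw [hf x]
    refine Finset.sum_congr rfl fun j _ => Finset.sum_congr rfl fun p _ => ?_
    rw [hkey j p x]
  · have hC0 : 0 ≤ Csigma a B1 := Real.sqrt_nonneg _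
    calc ∑ j : Fin r, ‖α j‖ * Real.sqrt (∑' τ : Tup d1, (β j τ) ^ 2)
        ≤ ∑ _j : Fin r, B2 * Csigma a B1 := by
          refine Finset.sum_le_sum fun j _ => ?_
          exact mul_le_mul (hα j) (hle j) (Real.sqrt_nonneg _) hB2.le
      _ = (r : ℝ) * (B2 * Csigma a B1) := by
          rw [Finset.sum_const, Finset.card_univ, Fintype.card_fin, nsmul_eq_mul]
      _ = Csigma a B1 * B2 * r := by ring
end
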